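/- arXiv:1808.00190 — 5 statements merged into one kernel-verified Lean document; each statement's English description precedes it below -/
import Mathlib

section
/- Let f : (0,∞) → [0,∞) and suppose that for each t > 0 the function r ↦ e^{-t f(r)} is completely monotone on (0,∞). Then f' is completely monotone, i.e., f is a Bernstein function. -/
/-- `g : (0,∞) → ℝ` is completely monotone: `g` is `C^∞` on `(0,∞)` and
`(-1)^n g^{(n)}(r) ≥ 0` for all `r > 0`, `n ≥ 0`. -/
def CompletelyMonotoneOn (g : ℝ → ℝ) : Prop :=
  ContDiffOn ℝ (⊤ : ℕ∞) g (Set.Ioi 0) ∧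
    ∀ (n : ℕ) (r : ℝ), 0 < r → 0 ≤ (-1 : ℝ) ^ n * iteratedDerivWithin n g (Set.Ioi 0) r

/-- `f : (0,∞) → [0,∞)` is a Bernstein function: `f` is `C^∞` on `(0,∞)`, nonnegative, and
`(-1)^{n-1} f^{(n)}(r) ≥ 0` for all `r > 0`, `n ≥ 1`. -/
def BernsteinFunction (f : ℝ → ℝ) : Prop :=
  ContDiffOn ℝ (⊤ : ℕ∞) f (Set.Ioi 0) ∧ (∀ r : ℝ, 0 < r → 0 ≤ f r) ∧
    ∀ (n : ℕ), 1 ≤ n → ∀ r : ℝ, 0 < r →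
      0 ≤ (-1 : ℝ) ^ (n - 1) * iteratedDerivWithin n f (Set.Ioi 0) r

open Set Filter

private lemma derivWithin_zero_of_eqOn {g : ℝ → ℝ}
    (hg : ∀ x ∈ Set.Ioi (0:ℝ), g x = 0) {r : ℝ} (hr : r ∈ Set.Ioi (0:ℝ)) :
    derivWithin g (Set.Ioi 0) r = 0 := by
  have h1 : derivWithin g (Set.Ioi 0) r = derivWithin (fun _ => (0:ℝ)) (Set.Ioi 0) r :=
    derivWithin_congr (fun x hx => hg x hx) (hg r hr)
  rw [h1, derivWithin_fun_const]; rfl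

/-- Key structural lemma: the `(n+1)`-st derivative of `r ↦ exp (-(t f r))` has the form
`exp (-(t f r)) * ∑_{k<n+2} t^k C k r`, with `C 0 = 0` on `(0,∞)` and
`C 1 = - f^{(n+1)}` on `(0,∞)`, each `C k` smooth. -/
private lemma exp_iter_formula (f : ℝ → ℝ) (hf : ContDiffOn ℝ (⊤ : ℕ∞) f (Set.Ioi 0)) (n : ℕ) :
    ∃ C : ℕ → ℝ → ℝ,
      (∀ k, ContDiffOn ℝ (⊤ : ℕ∞) (C k) (Set.Ioi 0)) ∧
      (∀ r ∈ Set.Ioi (0:ℝ), C 0 r = 0) ∧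
      (∀ r ∈ Set.Ioi (0:ℝ), C 1 r = -(iteratedDerivWithin (n+1) f (Set.Ioi 0) r)) ∧
      (∀ k, n + 2 ≤ k → ∀ r ∈ Set.Ioi (0:ℝ), C k r = 0) ∧
      (∀ t : ℝ, ∀ r ∈ Set.Ioi (0:ℝ),
        iteratedDerivWithin (n+1) (fun r => Real.exp (-(t * f r))) (Set.Ioi 0) r
          = Real.exp (-(t * f r)) * ∑ k ∈ Finset.range (n+2), t^k * C k r) := by
  have hU : UniqueDiffOn ℝ (Set.Ioi (0:ℝ)) := uniqueDiffOn_Ioi 0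
  have hfd : DifferentiableOn ℝ f (Set.Ioi 0) := hf.differentiableOn (by simp)
  have hf' : ContDiffOn ℝ (⊤ : ℕ∞) (derivWithin f (Set.Ioi 0)) (Set.Ioi 0) :=
    hf.derivWithin hU (by simp)
  induction n with
  | zero =>
    refine ⟨fun k => if k = 1 then (fun r => -(derivWithin f (Set.Ioi 0) r)) else fun _ => 0,
      ?_, ?_, ?_, ?_, ?_⟩
    · intro k
      by_cases hk : k = 1
      · simp only [hk, if_pos]
        exact hf'.neg
      · simp only [if_neg hk]
        exact contDiffOn_const
    · intro r _; simp
    · intro r hr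
      simp [iteratedDerivWithin_one]
    · intro k hk r _
      have : k ≠ 1 := by omega
      simp [this]
    · intro t r hr
      have hfr : HasDerivWithinAt f (derivWithin f (Set.Ioi 0) r) (Set.Ioi 0) r :=
        (hfd r hr).hasDerivWithinAt
      have hex : HasDerivWithinAt (fun r => Real.exp (-(t * f r)))
          (Real.exp (-(t * f r)) * (-(t * derivWithin f (Set.Ioi 0) r))) (Set.Ioi 0) r :=
        ((hfr.const_mul t).neg).exp
      rw [iteratedDerivWithin_one, hex.derivWithin (hU r hr)]
      simp [Finset.sum_range_succ]
  | succ n ih =>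
    obtain ⟨C, hCsm, hC0, hC1, hCtop, hCform⟩ := ih
    set S := Set.Ioi (0:ℝ) with hS
    -- new coefficients
    set D : ℕ → ℝ → ℝ := fun k r =>
      derivWithin (C k) S r - derivWithin f S r * C (k-1) r with hD
    have hCd : ∀ k, DifferentiableOn ℝ (C k) S := fun k => (hCsm k).differentiableOn (by simp)
    refine ⟨D, ?_, ?_, ?_, ?_, ?_⟩
    · intro k
      exact ((hCsm k).derivWithin hU (by simp)).sub (hf'.mul (hCsm (k-1)))
    · intro r hr
      simp only [hD]
      rw [derivWithin_zero_of_eqOn hC0 hr, hC0 r hr, mul_zero, sub_zero]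
    · intro r hr
      have h1 : derivWithin (C 1) S r
          = derivWithin (fun r => -(iteratedDerivWithin (n+1) f S r)) S r :=
        derivWithin_congr (fun x hx => hC1 x hx) (hC1 r hr)
      have h2 : derivWithin (fun r => -(iteratedDerivWithin (n+1) f S r)) S r
          = -(derivWithin (iteratedDerivWithin (n+1) f S) S r) := by
        exact derivWithin.fun_neg
      show derivWithin (C 1) S r - derivWithin f S r * C 0 r = _
      rw [h1, h2, hC0 r hr, mul_zero, sub_zero,
        ← iteratedDerivWithin_succ]
    · intro k hk r hr
      have hkk : n + 2 ≤ k - 1 := by omega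
      have hd0 : derivWithin (C k) S r = 0 :=
        derivWithin_zero_of_eqOn (hCtop k (by omega)) hr
      show derivWithin (C k) S r - derivWithin f S r * C (k-1) r = 0
      rw [hd0, hCtop (k-1) hkk r hr, mul_zero, sub_zero]
    · intro t r hr
      have hfr : HasDerivWithinAt f (derivWithin f S r) S r := (hfd r hr).hasDerivWithinAt
      have hex : HasDerivWithinAt (fun r => Real.exp (-(t * f r)))
          (Real.exp (-(t * f r)) * (-(t * derivWithin f S r))) S r :=
        ((hfr.const_mul t).neg).exp
      have hB : HasDerivWithinAt (fun r => ∑ k ∈ Finset.range (n+2), t^k * C k r)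
          (∑ k ∈ Finset.range (n+2), t^k * derivWithin (C k) S r) S r := by
        apply HasDerivWithinAt.fun_sum
        intro k _
        exact ((hCd k r hr).hasDerivWithinAt).const_mul (t^k)
      have hmul := hex.fun_mul hB
      have hstep : iteratedDerivWithin (n+2) (fun r => Real.exp (-(t * f r))) S r
          = derivWithin (fun r => Real.exp (-(t * f r))
              * ∑ k ∈ Finset.range (n+2), t^k * C k r) S r := by
        rw [iteratedDerivWithin_succ]
        exact derivWithin_congr (fun x hx => hCform t x hx) (hCform t r hr)
      rw [hstep, hmul.derivWithin (hU r hr)]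
      -- now algebra: show the derivative expression equals the new sum
      have hC0' : derivWithin (C 0) S r = 0 := derivWithin_zero_of_eqOn hC0 hr
      have hCt' : derivWithin (C (n+2)) S r = 0 :=
        derivWithin_zero_of_eqOn (hCtop (n+2) le_rfl) hr
      have sumid :
          Real.exp (-(t * f r)) * (-(t * derivWithin f S r))
              * (∑ k ∈ Finset.range (n+2), t^k * C k r)
            + Real.exp (-(t * f r)) * (∑ k ∈ Finset.range (n+2), t^k * derivWithin (C k) S r)
          = Real.exp (-(t * f r)) * ∑ k ∈ Finset.range (n+3), t^k * D k r := by
        have e1 : ∑ k ∈ Finset.range (n+3), t^k * D k r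
            = ∑ k ∈ Finset.range (n+2), t^(k+1) * D (k+1) r + t^0 * D 0 r :=
          Finset.sum_range_succ' _ _
        have e2 : ∀ k, D (k+1) r = derivWithin (C (k+1)) S r - derivWithin f S r * C k r := by
          intro k; rfl
        have e3 : ∑ k ∈ Finset.range (n+2), t^k * derivWithin (C k) S r
            = ∑ k ∈ Finset.range (n+2), t^(k+1) * derivWithin (C (k+1)) S r := by
          rw [Finset.sum_range_succ' _ (n+1), hC0', Finset.sum_range_succ _ (n+1), hCt']
          simp
        have hD0 : D 0 r = 0 := by
          show derivWithin (C 0) S r - derivWithin f S r * C 0 r = 0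
          rw [hC0', hC0 r hr, mul_zero, sub_zero]
        have e4 : ∑ k ∈ Finset.range (n+2), t^(k+1) * D (k+1) r
            = ∑ k ∈ Finset.range (n+2),
                (t^(k+1) * derivWithin (C (k+1)) S r
                  - t^(k+1) * (derivWithin f S r * C k r)) := by
          apply Finset.sum_congr rfl
          intro k _
          rw [e2 k]; ring
        rw [e1, hD0, e3, e4, Finset.sum_sub_distrib]
        simp only [pow_zero, mul_zero, add_zero, one_mul]
        rw [mul_sub, Finset.mul_sum, Finset.mul_sum, Finset.mul_sum]
        have e5 : ∑ i ∈ Finset.range (n+2),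
              Real.exp (-(t * f r)) * -(t * derivWithin f S r) * (t ^ i * C i r)
            = ∑ i ∈ Finset.range (n+2),
                -(Real.exp (-(t * f r)) * (t ^ (i+1) * (derivWithin f S r * C i r))) :=
          Finset.sum_congr rfl (fun k _ => by ring)
        rw [e5, Finset.sum_neg_distrib]
        ring
      rw [← sumid]

/-- If `f : (0,∞) → [0,∞)` is such that `r ↦ e^{-t f(r)}` is completely monotone for every
`t > 0`, then `f` is a Bernstein function. -/
theorem bernstein_of_exp_completelyMonotone (f : ℝ → ℝ)
    (hfnn : ∀ r : ℝ, 0 < r → 0 ≤ f r)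
    (h : ∀ t : ℝ, 0 < t → CompletelyMonotoneOn (fun r => Real.exp (-(t * f r)))) :
    BernsteinFunction f := by
  set S := Set.Ioi (0:ℝ) with hS
  -- smoothness of f
  have hg1 : ContDiffOn ℝ (⊤ : ℕ∞) (fun r => Real.exp (-(1 * f r))) S := (h 1 one_pos).1
  have hf : ContDiffOn ℝ (⊤ : ℕ∞) f S := by
    have hl : ContDiffOn ℝ (⊤ : ℕ∞) (fun r => -Real.log (Real.exp (-(1 * f r)))) S :=
      (hg1.log (fun x _ => (Real.exp_pos _).ne')).neg
    exact hl.congr (fun r _ => by simp [Real.log_exp])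
  refine ⟨hf, hfnn, ?_⟩
  intro n hn r hr
  obtain ⟨m, rfl⟩ : ∃ m, n = m + 1 := ⟨n - 1, by omega⟩
  obtain ⟨C, hCsm, hC0, hC1, hCtop, hCform⟩ := exp_iter_formula f hf m
  set Q : ℝ → ℝ := fun t => ∑ k ∈ Finset.range (m+1), t^k * C (k+1) r with hQ
  have key : ∀ t : ℝ, 0 < t → 0 ≤ (-1:ℝ)^(m+1) * Q t := by
    intro t ht
    have h2 := (h t ht).2 (m+1) r hr
    rw [hCform t r hr] at h2
    have hsum : ∑ k ∈ Finset.range (m+2), t^k * C k r = t * Q t := by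
      rw [Finset.sum_range_succ' _ (m+1), hC0 r hr, hQ, Finset.mul_sum]
      simp only [mul_zero, add_zero, pow_zero]
      apply Finset.sum_congr rfl
      intro k _; ring
    rw [hsum] at h2
    have h3 : (0:ℝ) < Real.exp (-(t * f r)) * t := mul_pos (Real.exp_pos _) ht
    have h4 : (-1:ℝ)^(m+1) * (Real.exp (-(t * f r)) * (t * Q t))
        = (Real.exp (-(t * f r)) * t) * ((-1:ℝ)^(m+1) * Q t) := by ring
    rw [h4] at h2
    exact (mul_nonneg_iff_of_pos_left h3).mp h2
  have hQcont : Continuous Q := by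
    apply continuous_finset_sum
    intro k _
    exact (continuous_pow k).mul continuous_const
  have hQ0 : Q 0 = -(iteratedDerivWithin (m+1) f S r) := by
    show ∑ k ∈ Finset.range (m+1), (0:ℝ)^k * C (k+1) r = _
    rw [Finset.sum_eq_single_of_mem 0 (Finset.mem_range.mpr (by omega))]
    · simpa using hC1 r hr
    · intro k _ hk
      simp [zero_pow hk]
  have htend : Tendsto (fun t => (-1:ℝ)^(m+1) * Q t) (nhdsWithin 0 (Set.Ioi 0))
      (nhds ((-1:ℝ)^(m+1) * Q 0)) :=
    ((continuous_const.mul hQcont).tendsto 0).mono_left nhdsWithin_le_nhds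
  have hfin : 0 ≤ (-1:ℝ)^(m+1) * Q 0 := by
    refine ge_of_tendsto htend ?_
    filter_upwards [self_mem_nhdsWithin] with t ht
    exact key t ht
  rw [hQ0] at hfin
  have : (-1:ℝ)^(m+1) * -(iteratedDerivWithin (m+1) f S r)
      = (-1:ℝ)^m * iteratedDerivWithin (m+1) f S r := by
    rw [pow_succ]; ring
  rw [this] at hfin
  simpa using hfin
end

section
/- Let p_t^k(r) = ∫_{(0,∞)} (2πs)^{-k/2} exp(-r²/(2s)) dμ(s) for a finite measure μ on (0,∞). Then for all r > 0, (d/dr) p_t^k(r) = -2π r p_t^{k+2}(r), where p_t^{k+2}(r) = ∫_{(0,∞)} (2πs)^{-(k+2)/2} exp(-r²/(2s)) dμ(s). -/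
/-!
Differentiate under the integral sign. In the radius `x` the Gaussian factor satisfies
`∂ₓ [(2πs)^(-m/2) e^{-x²/2s}] = -(2πx) (2πs)^(-(m+2)/2) e^{-x²/2s}`, and away from `x = 0` these
integrands are bounded uniformly in `s > 0`: with `u = x²/2s` the integrand equals
`u^(m/2) e^{-u} / (πx²)^(m/2)`, and `u^a e^{-u} ≤ ⌈a⌉₊!`. Since `μ` is finite, constants dominate.
-/

open MeasureTheory Real Metric

noncomputable section

/-- The density of the centred Gaussian of variance `s` on `ℝ^m`, at a point of norm `x`. -/
def gaussianRadialDensity (m x s : ℝ) : ℝ :=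
  (2 * π * s) ^ (-m / 2) * exp (-(x ^ 2 / (2 * s)))

lemma rpow_mul_exp_neg_le_factorial {u a : ℝ} (hu : 0 ≤ u) (ha : 0 ≤ a) :
    u ^ a * exp (-u) ≤ (⌈a⌉₊).factorial := by
  set n := ⌈a⌉₊
  have hfac : (1 : ℝ) ≤ n.factorial := by exact_mod_cast n.factorial_pos
  rcases le_or_gt u 1 with hu1 | hu1
  · calc u ^ a * exp (-u) ≤ 1 * 1 :=
          mul_le_mul (rpow_le_one hu hu1 ha) (exp_le_one_iff.mpr (by linarith)) (by positivity)
            zero_le_one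
      _ ≤ n.factorial := by linarith
  · have hpow : u ^ a ≤ u ^ n := by
      rw [← rpow_natCast]; exact rpow_le_rpow_of_exponent_le hu1.le (Nat.le_ceil a)
    have hexp : u ^ n ≤ n.factorial * exp u := by
      have := pow_div_factorial_le_exp u hu n
      rwa [div_le_iff₀ (by positivity), mul_comm] at this
    calc u ^ a * exp (-u) ≤ n.factorial * exp u * exp (-u) := by gcongr; exact hpow.trans hexp
      _ = n.factorial := by rw [mul_assoc, ← exp_add, add_neg_cancel, exp_zero, mul_one]

namespace gaussianRadialDensity

variable {m x y s : ℝ}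

lemma nonneg (hs : 0 ≤ s) : 0 ≤ gaussianRadialDensity m x s := by
  unfold gaussianRadialDensity; positivity

lemma le_of_abs_le (hs : 0 ≤ s) (hxy : |y| ≤ |x|) :
    gaussianRadialDensity m x s ≤ gaussianRadialDensity m y s := by
  unfold gaussianRadialDensity
  refine mul_le_mul_of_nonneg_left ?_ (by positivity)
  rw [exp_le_exp, neg_le_neg_iff]
  exact div_le_div_of_nonneg_right (sq_le_sq.mpr hxy) (by positivity)

lemma le_factorial_div (hm : 0 ≤ m) (hx : x ≠ 0) (hs : 0 < s) :
    gaussianRadialDensity m x s ≤ (⌈m / 2⌉₊).factorial / (π * x ^ 2) ^ (m / 2) := by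
  set u := x ^ 2 / (2 * s)
  have hu : 0 < u := by positivity
  have hscale : 2 * π * s = π * x ^ 2 / u := by simp only [u]; field_simp
  have hrpow : (2 * π * s) ^ (-m / 2) = u ^ (m / 2) / (π * x ^ 2) ^ (m / 2) := by
    rw [hscale, neg_div, rpow_neg (by positivity), div_rpow (by positivity) hu.le, inv_div]
  rw [gaussianRadialDensity, hrpow, div_mul_eq_mul_div]
  gcongr
  exact rpow_mul_exp_neg_le_factorial hu.le (by positivity)

lemma hasDerivAt (hs : 0 < s) :
    HasDerivAt (gaussianRadialDensity m · s)
      (-(2 * π * x) * gaussianRadialDensity (m + 2) x s) x := by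
  have hexponent : HasDerivAt (fun y : ℝ => -(y ^ 2 / (2 * s))) (-(x / s)) x := by
    refine ((hasDerivAt_pow 2 x).div_const (2 * s)).neg.congr_deriv ?_
    field_simp
    norm_num
  refine (hexponent.exp.const_mul ((2 * π * s) ^ (-m / 2))).congr_deriv ?_
  have hshift : (2 * π * s) ^ (-(m + 2) / 2) = (2 * π * s) ^ (-m / 2) * (2 * π * s)⁻¹ := by
    rw [← rpow_neg_one, ← rpow_add (by positivity)]
    ring_nf
  simp only [gaussianRadialDensity, hshift]
  field_simp

end gaussianRadialDensity

lemma integrable_gaussianRadialDensity {m x : ℝ} (ν : Measure ℝ) [IsFiniteMeasure ν]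
    (hν : ∀ᵐ s ∂ν, 0 < s) (hm : 0 ≤ m) (hx : x ≠ 0) :
    Integrable (gaussianRadialDensity m x) ν := by
  refine (integrable_const ((⌈m / 2⌉₊).factorial / (π * x ^ 2) ^ (m / 2))).mono'
    (by unfold gaussianRadialDensity; fun_prop) ?_
  filter_upwards [hν] with s hs
  rw [norm_of_nonneg (gaussianRadialDensity.nonneg hs.le)]
  exact gaussianRadialDensity.le_factorial_div hm hx hs

lemma abs_le_of_mem_ball_half {r x : ℝ} (hx : x ∈ ball r (|r| / 2)) :
    |r / 2| ≤ |x| ∧ |x| ≤ 2 * |r| := by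
  rw [mem_ball, dist_eq_norm, norm_eq_abs] at hx
  have h_lower := abs_sub_abs_le_abs_sub r x
  have h_upper := abs_sub_abs_le_abs_sub x r
  rw [abs_sub_comm] at h_lower
  rw [abs_div, abs_two]
  constructor <;> linarith

theorem hasDerivAt_integral_gaussianRadialDensity {m r : ℝ} (ν : Measure ℝ) [IsFiniteMeasure ν]
    (hν : ∀ᵐ s ∂ν, 0 < s) (hm : 0 ≤ m) (hr : r ≠ 0) :
    HasDerivAt (fun x => ∫ s, gaussianRadialDensity m x s ∂ν)
      (-(2 * π * r) * ∫ s, gaussianRadialDensity (m + 2) r s ∂ν) r := by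
  set bound := 2 * π * (2 * |r|) *
    ((⌈(m + 2) / 2⌉₊).factorial / (π * (r / 2) ^ 2) ^ ((m + 2) / 2))
  have hderiv_le : ∀ᵐ s ∂ν, ∀ x ∈ ball r (|r| / 2),
      ‖-(2 * π * x) * gaussianRadialDensity (m + 2) x s‖ ≤ bound := by
    filter_upwards [hν] with s hs x hx
    obtain ⟨hx_lower, hx_upper⟩ := abs_le_of_mem_ball_half hx
    rw [norm_mul, norm_neg, norm_of_nonneg (gaussianRadialDensity.nonneg hs.le), norm_mul,
      norm_mul, norm_two, norm_of_nonneg pi_pos.le, norm_eq_abs]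
    refine mul_le_mul (by gcongr) ?_ (gaussianRadialDensity.nonneg hs.le) (by positivity)
    calc gaussianRadialDensity (m + 2) x s ≤ gaussianRadialDensity (m + 2) (r / 2) s :=
          gaussianRadialDensity.le_of_abs_le hs.le hx_lower
      _ ≤ _ := gaussianRadialDensity.le_factorial_div (by linarith) (by positivity) hs
  have hdominated := hasDerivAt_integral_of_dominated_loc_of_deriv_le (ball_mem_nhds r (by positivity))
    (.of_forall fun x => by unfold gaussianRadialDensity; fun_prop)
    (integrable_gaussianRadialDensity ν hν hm hr) (by unfold gaussianRadialDensity; fun_prop)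
    hderiv_le (integrable_const bound)
    (by filter_upwards [hν] with s hs x _ using gaussianRadialDensity.hasDerivAt hs)
  simpa only [integral_const_mul] using hdominated.2

end

theorem deriv_subordinated_density_general (k : ℕ)
    (μ : Measure ℝ) [IsFiniteMeasure μ] (r : ℝ) (hr : 0 < r) :
    HasDerivAt (fun x : ℝ =>
        ∫ s in Set.Ioi (0 : ℝ), (2 * Real.pi * s) ^ (-(k : ℝ) / 2) *
          Real.exp (-(x ^ 2 / (2 * s))) ∂μ)
      (-(2 * Real.pi * r) *
        ∫ s in Set.Ioi (0 : ℝ), (2 * Real.pi * s) ^ (-((k : ℝ) + 2) / 2) *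
          Real.exp (-(r ^ 2 / (2 * s))) ∂μ) r :=
  hasDerivAt_integral_gaussianRadialDensity (μ.restrict (Set.Ioi 0))
    (ae_restrict_mem measurableSet_Ioi) k.cast_nonneg hr.ne'

/-- For `p_t^k(r) = ∫_{(0,∞)} (2πs)^{-k/2} e^{-r²/(2s)} dμ(s)` with `μ` a finite measure on
`(0,∞)`, one has `(d/dr) p_t^k(r) = -2π r p_t^{k+2}(r)` for all `r > 0`. -/
theorem deriv_subordinated_density (k : ℕ) (hk : 1 ≤ k)
    (μ : Measure ℝ) [IsFiniteMeasure μ] (r : ℝ) (hr : 0 < r) :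
    HasDerivAt (fun x : ℝ =>
        ∫ s in Set.Ioi (0 : ℝ), (2 * Real.pi * s) ^ (-(k : ℝ) / 2) *
          Real.exp (-(x ^ 2 / (2 * s))) ∂μ)
      (-(2 * Real.pi * r) *
        ∫ s in Set.Ioi (0 : ℝ), (2 * Real.pi * s) ^ (-((k : ℝ) + 2) / 2) *
          Real.exp (-(r ^ 2 / (2 * s))) ∂μ) r :=
  deriv_subordinated_density_general k μ r hr
end

section
/- Define g_t^k(r) := p_t^k(2√r) where p_t^k(r) = ∫_{(0,∞)} (2πs)^{-k/2} e^{-r²/(2s)} dμ(s) for a finite measure μ on (0,∞). Then (d/dr) g_t^k(r) = -4π g_t^{k+2}(r) for all r > 0, and by iteration (d^n/dr^n) g_t^1(r) = (-4π)^n g_t^{1+2n}(r) for all n ≥ 1 and r > 0. -/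
/-!
After the substitution `r ↦ 2√r` the integrand of `g^k` becomes `(2πs)^{-k/2} e^{-2r/s}`, whose
`r`-derivative is `-(2/s)` times itself, i.e. `-4π` times the integrand of `g^{k+2}`.
Differentiation under the integral sign is legitimate because, for `r` bounded away from `0`,
these integrands are bounded uniformly in `s` (as `t^a e^{-ct} ≤ (a/c)^a`) and `μ` is finite.
Iterating the first identity gives the `n`-th derivative.
-/

open MeasureTheory Real Set

theorem rpow_mul_exp_neg_mul_le {a c t : ℝ} (ha : 0 ≤ a) (hc : 0 < c) (ht : 0 ≤ t) :
    t ^ a * exp (-(c * t)) ≤ (a / c) ^ a := by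
  rcases ha.eq_or_lt with rfl | ha
  · simpa using mul_nonneg hc.le ht
  have hy : 0 ≤ c * t / a := by positivity
  have ht_eq : t ^ a = (a / c) ^ a * (c * t / a) ^ a := by
    rw [← mul_rpow (by positivity) hy]
    congr 1
    field_simp
  calc t ^ a * exp (-(c * t)) ≤ (a / c) ^ a * exp (c * t / a) ^ a * exp (-(c * t)) := by
        rw [ht_eq]
        gcongr
        linarith [add_one_le_exp (c * t / a)]
    _ = (a / c) ^ a := by
        rw [← exp_mul, div_mul_cancel₀ _ ha.ne', mul_assoc, ← exp_add]
        simp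

noncomputable def gaussSqrtKernel (k : ℕ) (s x : ℝ) : ℝ :=
  (2 * π * s) ^ (-(k : ℝ) / 2) * exp (-(2 * x / s))

namespace gaussSqrtKernel

variable {k : ℕ} {s x : ℝ}

theorem measurable (k : ℕ) (x : ℝ) : Measurable fun s ↦ gaussSqrtKernel k s x := by
  unfold gaussSqrtKernel; fun_prop

theorem eq_integrand (k : ℕ) (hs : s ≠ 0) (hx : 0 ≤ x) :
    (2 * π * s) ^ (-(k : ℝ) / 2) * exp (-((2 * √x) ^ 2 / (2 * s))) = gaussSqrtKernel k s x := by
  rw [gaussSqrtKernel, mul_pow, sq_sqrt hx]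
  congr 3
  field_simp

theorem nonneg (hs : 0 < s) : 0 ≤ gaussSqrtKernel k s x := by
  unfold gaussSqrtKernel; positivity

theorem add_two (hs : 0 < s) :
    gaussSqrtKernel (k + 2) s x = (2 * π * s)⁻¹ * gaussSqrtKernel k s x := by
  have h2πs : 0 < 2 * π * s := by positivity
  rw [gaussSqrtKernel, gaussSqrtKernel, ← mul_assoc, ← rpow_neg_one, ← rpow_add h2πs]
  push_cast
  ring_nf

theorem hasDerivAt (hs : 0 < s) :
    HasDerivAt (gaussSqrtKernel k s) (-(4 * π) * gaussSqrtKernel (k + 2) s x) x := by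
  have h := ((((hasDerivAt_id' x).const_mul 2).div_const s).neg.exp).const_mul
    ((2 * π * s) ^ (-(k : ℝ) / 2))
  simp only [Pi.neg_apply] at h
  refine h.congr_deriv ?_
  rw [add_two hs, gaussSqrtKernel]
  field_simp
  ring

theorem antitone (hs : 0 < s) {y : ℝ} (hxy : x ≤ y) :
    gaussSqrtKernel k s y ≤ gaussSqrtKernel k s x := by
  unfold gaussSqrtKernel; gcongr

theorem le_of_pos (hs : 0 < s) (hx : 0 < x) :
    gaussSqrtKernel k s x ≤ (k / (8 * π * x)) ^ ((k : ℝ) / 2) := by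
  have h := rpow_mul_exp_neg_mul_le (a := (k : ℝ) / 2) (c := 4 * π * x) (t := (2 * π * s)⁻¹)
    (by positivity) (by positivity) (by positivity)
  calc gaussSqrtKernel k s x
      = (2 * π * s)⁻¹ ^ ((k : ℝ) / 2) * exp (-(4 * π * x * (2 * π * s)⁻¹)) := by
        rw [gaussSqrtKernel, inv_rpow (by positivity), ← rpow_neg (by positivity), neg_div]
        congr 3
        field_simp
        ring
    _ ≤ _ := h
    _ = (k / (8 * π * x)) ^ ((k : ℝ) / 2) := by
        congr 1
        field_simp
        ring

end gaussSqrtKernel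

section SetIntegral

variable (μ : Measure ℝ) [IsFiniteMeasure μ]

theorem integrable_gaussSqrtKernel (k : ℕ) {x : ℝ} (hx : 0 < x) :
    Integrable (fun s ↦ gaussSqrtKernel k s x) (μ.restrict (Ioi 0)) := by
  refine .of_bound (gaussSqrtKernel.measurable k x).aestronglyMeasurable
    ((k / (8 * π * x)) ^ ((k : ℝ) / 2)) ?_
  filter_upwards [ae_restrict_mem measurableSet_Ioi] with s (hs : 0 < s)
  rw [norm_of_nonneg (gaussSqrtKernel.nonneg hs)]
  exact gaussSqrtKernel.le_of_pos hs hx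

theorem hasDerivAt_setIntegral_gaussSqrtKernel (k : ℕ) {r : ℝ} (hr : 0 < r) :
    HasDerivAt (fun x ↦ ∫ s in Ioi 0, gaussSqrtKernel k s x ∂μ)
      (-(4 * π) * ∫ s in Ioi 0, gaussSqrtKernel (k + 2) s r ∂μ) r := by
  have hr2 : 0 < r / 2 := half_pos hr
  have h_bound : ∀ᵐ s ∂μ.restrict (Ioi 0), ∀ x ∈ Ioi (r / 2),
      ‖-(4 * π) * gaussSqrtKernel (k + 2) s x‖
        ≤ 4 * π * ((k + 2 : ℕ) / (8 * π * (r / 2))) ^ ((k + 2 : ℕ) / 2 : ℝ) := by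
    filter_upwards [ae_restrict_mem measurableSet_Ioi] with s (hs : 0 < s) x (hx : r / 2 < x)
    rw [norm_mul, norm_neg, norm_of_nonneg (by positivity),
      norm_of_nonneg (gaussSqrtKernel.nonneg hs)]
    gcongr
    exact (gaussSqrtKernel.antitone hs hx.le).trans (gaussSqrtKernel.le_of_pos hs hr2)
  have h_diff : ∀ᵐ s ∂μ.restrict (Ioi 0), ∀ x ∈ Ioi (r / 2),
      HasDerivAt (gaussSqrtKernel k s) (-(4 * π) * gaussSqrtKernel (k + 2) s x) x := by
    filter_upwards [ae_restrict_mem measurableSet_Ioi] with s (hs : 0 < s) x _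
    exact gaussSqrtKernel.hasDerivAt hs
  have h := hasDerivAt_integral_of_dominated_loc_of_deriv_le (Ioi_mem_nhds (half_lt_self hr))
    (.of_forall fun x ↦ (gaussSqrtKernel.measurable k x).aestronglyMeasurable)
    (integrable_gaussSqrtKernel μ k hr)
    ((gaussSqrtKernel.measurable (k + 2) r).aestronglyMeasurable.const_mul _)
    h_bound (integrable_const _) h_diff
  rw [← integral_const_mul]
  exact h.2

end SetIntegral

theorem iteratedDerivWithin_eq_pow_mul_of_hasDerivAt {𝕜 : Type*} [NontriviallyNormedField 𝕜]
    {f : ℕ → 𝕜 → 𝕜} {U : Set 𝕜} {c : 𝕜} {d : ℕ} (hU : IsOpen U)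
    (hf : ∀ k, ∀ x ∈ U, HasDerivAt (f k) (c * f (k + d) x) x) (n k : ℕ) {x : 𝕜} (hx : x ∈ U) :
    iteratedDerivWithin n (f k) U x = c ^ n * f (k + d * n) x := by
  induction n generalizing x with
  | zero => simp
  | succ n ih =>
    rw [iteratedDerivWithin_succ, derivWithin_congr (fun y hy ↦ ih hy) (ih hx),
      derivWithin_of_isOpen hU hx, ((hf _ x hx).const_mul (c ^ n)).deriv,
      show k + d * n + d = k + d * (n + 1) by ring]
    ring

/-- Let `p^k(r) = ∫_{(0,∞)} (2πs)^{-k/2} e^{-r²/(2s)} dμ(s)` for a finite measure `μ` on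
`(0,∞)` and set `g^k(r) = p^k(2√r)`. Then `(d/dr) g^k(r) = -4π g^{k+2}(r)` for `r > 0` and,
by iteration, `(d^n/dr^n) g^1(r) = (-4π)^n g^{1+2n}(r)` for all `n ≥ 1`, `r > 0`. -/
theorem deriv_g_dimension_walk (μ : Measure ℝ) [IsFiniteMeasure μ]
    (p : ℕ → ℝ → ℝ)
    (hp : ∀ k r, p k r = ∫ s in Set.Ioi (0 : ℝ),
      (2 * Real.pi * s) ^ (-(k : ℝ) / 2) * Real.exp (-(r ^ 2 / (2 * s))) ∂μ)
    (g : ℕ → ℝ → ℝ) (hg : ∀ k r, g k r = p k (2 * Real.sqrt r)) :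
    (∀ k : ℕ, 1 ≤ k → ∀ r : ℝ, 0 < r →
        HasDerivAt (g k) (-(4 * Real.pi) * g (k + 2) r) r) ∧
    (∀ n : ℕ, 1 ≤ n → ∀ r : ℝ, 0 < r →
        iteratedDerivWithin n (g 1) (Set.Ioi 0) r = (-(4 * Real.pi)) ^ n * g (1 + 2 * n) r) := by
  have hg_eq : ∀ k, ∀ x ∈ Ioi (0 : ℝ), g k x = ∫ s in Ioi 0, gaussSqrtKernel k s x ∂μ := by
    intro k x (hx : 0 < x)
    rw [hg, hp]
    exact setIntegral_congr_fun measurableSet_Ioi fun s (hs : 0 < s) ↦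
      gaussSqrtKernel.eq_integrand k hs.ne' hx.le
  have hderiv : ∀ k, ∀ r ∈ Ioi (0 : ℝ), HasDerivAt (g k) (-(4 * π) * g (k + 2) r) r := by
    intro k r hr
    rw [hg_eq (k + 2) r hr]
    exact (hasDerivAt_setIntegral_gaussSqrtKernel μ k hr).congr_of_eventuallyEq
      (Filter.eventuallyEq_of_mem (Ioi_mem_nhds hr) (hg_eq k))
  exact ⟨fun k _ r hr ↦ hderiv k r hr, fun n _ r hr ↦
    iteratedDerivWithin_eq_pow_mul_of_hasDerivAt isOpen_Ioi hderiv n 1 hr⟩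
end

section
/- Let p : ℝ → [0,∞) be an integrable even function that is nonincreasing on [0,∞) (unimodal with mode 0) and bounded. Then ∫_ℝ |p(x+y) - p(x)| dx ≤ 4 |y| · ‖p‖_∞ for every y ∈ ℝ. -/
open MeasureTheory

/-! For `y ≥ 0` the difference `g x = p (x + y) - p x` has integral `0` and changes sign only at
`-y/2`, the point where `|x + y| = |x|`. Hence `∫ |g| = 2 ∫_{x ≤ -y/2} g`, and by translation the
latter integral is `∫_{-y/2}^{y/2} p ≤ y M`. Negative `y` reduce to positive ones by translating
the integrand. -/

theorem integral_abs_eq_two_mul_setIntegral_of_integral_eq_zero {X : Type*} [MeasurableSpace X]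
    {μ : Measure X} {g : X → ℝ} {s : Set X} (hs : MeasurableSet s) (hg : Integrable g μ)
    (hg0 : ∫ x, g x ∂μ = 0) (hpos : ∀ x ∈ s, 0 ≤ g x) (hneg : ∀ x ∈ sᶜ, g x ≤ 0) :
    ∫ x, |g x| ∂μ = 2 * ∫ x in s, g x ∂μ := by
  have hs_abs : ∫ x in s, |g x| ∂μ = ∫ x in s, g x ∂μ :=
    setIntegral_congr_fun hs fun x hx => abs_of_nonneg (hpos x hx)
  have hsc_abs : ∫ x in sᶜ, |g x| ∂μ = -∫ x in sᶜ, g x ∂μ := by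
    rw [← integral_neg]
    exact setIntegral_congr_fun hs.compl fun x hx => abs_of_nonpos (hneg x hx)
  have hsplit := integral_add_compl hs hg
  rw [← integral_add_compl hs hg.abs, hs_abs, hsc_abs]
  linarith

theorem setIntegral_Iic_comp_add_right {E : Type*} [NormedAddCommGroup E] [NormedSpace ℝ E]
    (f : ℝ → E) (b y : ℝ) :
    ∫ x in Set.Iic b, f (x + y) = ∫ x in Set.Iic (b + y), f x := by
  have := (measurePreserving_add_right volume y).setIntegral_preimage_emb
    (measurableEmbedding_addRight y) f (Set.Iic (b + y))
  rwa [Set.preimage_add_const_Iic, add_sub_cancel_right] at this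

theorem integral_abs_sub_comp_add_neg (f : ℝ → ℝ) (y : ℝ) :
    ∫ x, |f (x + -y) - f x| = ∫ x, |f (x + y) - f x| := by
  rw [← integral_add_right_eq_self (fun x => |f (x + -y) - f x|) y]
  simp only [add_neg_cancel_right, abs_sub_comm]

theorem AntitoneOn.apply_le_apply_of_abs_le_abs {p : ℝ → ℝ} (hmono : AntitoneOn p (Set.Ici 0))
    (heven : ∀ x, p (-x) = p x) {a b : ℝ} (hab : |a| ≤ |b|) : p b ≤ p a := by
  have habs : ∀ t, p |t| = p t := fun t => by
    rcases abs_choice t with h | h <;> rw [h]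
    exact heven t
  rw [← habs a, ← habs b]
  exact hmono (abs_nonneg a) (abs_nonneg b) hab

theorem integral_abs_sub_comp_add_le_of_even_of_antitoneOn {p : ℝ → ℝ} (hint : Integrable p)
    (heven : ∀ x, p (-x) = p x) (hmono : AntitoneOn p (Set.Ici 0)) {M : ℝ} (hM : ∀ x, p x ≤ M)
    {y : ℝ} (hy : 0 ≤ y) :
    ∫ x, |p (x + y) - p x| ≤ 2 * y * M := by
  have hshift : Integrable fun x => p (x + y) := hint.comp_add_right y
  have hmass : ∫ x, (p (x + y) - p x) = 0 := by
    rw [integral_sub hshift hint, integral_add_right_eq_self, sub_self]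
  have hpos : ∀ x ∈ Set.Iic (-(y / 2)), 0 ≤ p (x + y) - p x := fun x hx => by
    refine sub_nonneg.2 (hmono.apply_le_apply_of_abs_le_abs heven ?_)
    rw [Set.mem_Iic] at hx
    rw [abs_of_nonpos (by linarith : x ≤ 0), abs_le]
    constructor <;> linarith
  have hneg : ∀ x ∈ (Set.Iic (-(y / 2)))ᶜ, p (x + y) - p x ≤ 0 := fun x hx => by
    refine sub_nonpos.2 (hmono.apply_le_apply_of_abs_le_abs heven ?_)
    rw [Set.mem_compl_iff, Set.mem_Iic, not_le] at hx
    rw [abs_of_nonneg (by linarith : 0 ≤ x + y), abs_le]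
    constructor <;> linarith
  have hstrip : ∫ x in -(y / 2)..-(y / 2) + y, p x ≤ y * M := by
    calc ∫ x in -(y / 2)..-(y / 2) + y, p x ≤ ∫ _ in -(y / 2)..-(y / 2) + y, M :=
          intervalIntegral.integral_mono_on (by linarith) hint.intervalIntegrable
            intervalIntegrable_const fun x _ => hM x
      _ = y * M := by simp
  rw [integral_abs_eq_two_mul_setIntegral_of_integral_eq_zero (g := fun x => p (x + y) - p x)
    measurableSet_Iic (hshift.sub hint) hmass hpos hneg,
    integral_sub hshift.integrableOn hint.integrableOn, setIntegral_Iic_comp_add_right,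
    intervalIntegral.integral_Iic_sub_Iic hint.integrableOn hint.integrableOn]
  linarith

/-- If `p : ℝ → [0,∞)` is integrable, even, nonincreasing on `[0,∞)` and bounded by `M`, then
`∫ |p(x+y) - p(x)| dx ≤ 4 |y| M` for every `y`. -/
theorem unimodal_translation_L1_estimate (p : ℝ → ℝ)
    (hint : Integrable p) (hnn : ∀ x, 0 ≤ p x)
    (heven : ∀ x, p (-x) = p x) (hmono : AntitoneOn p (Set.Ici 0))
    (M : ℝ) (hM : ∀ x, p x ≤ M) (y : ℝ) :
    ∫ x, |p (x + y) - p x| ≤ 4 * |y| * M := by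
  have hM0 : 0 ≤ M := (hnn 0).trans (hM 0)
  have h2 : ∫ x, |p (x + y) - p x| ≤ 2 * |y| * M := by
    rcases le_total 0 y with hy | hy
    · rw [abs_of_nonneg hy]
      exact integral_abs_sub_comp_add_le_of_even_of_antitoneOn hint heven hmono hM hy
    · rw [abs_of_nonpos hy, ← integral_abs_sub_comp_add_neg]
      exact integral_abs_sub_comp_add_le_of_even_of_antitoneOn hint heven hmono hM
        (neg_nonneg.2 hy)
  nlinarith [abs_nonneg y]
end

section
/- Let m_k(r) = ∫_{(0,∞)} (2πs)^{-k/2} exp(-r²/(2s)) dμ(s) where μ is a measure on (0,∞) with ∫ min(1,s) dμ(s) < ∞. Then for k ≥ 3 and all r > 0, m_k(r) = -(1/(2π)) (1/r) (d/dr) m_{k-2}(r), and the function r ↦ m_k(√r) is completely monotone on (0,∞). -/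
open MeasureTheory

open Set

noncomputable section LevyAux

noncomputable section LevyAux

/-- Complex integrand. -/
def lPhi (a : ℝ) (n : ℕ) (z : ℂ) (s : ℝ) : ℂ :=
  (((2 * Real.pi * s) ^ a : ℝ) : ℂ) * (-(2 * (s : ℂ))⁻¹) ^ n * Complex.exp (-(z / (2 * (s : ℂ))))

def lPhiInt (μ : Measure ℝ) (a : ℝ) (n : ℕ) (z : ℂ) : ℂ :=
  ∫ s in Ioi (0 : ℝ), lPhi a n z s ∂μ

def lG (μ : Measure ℝ) (a : ℝ) (n : ℕ) (r : ℝ) : ℝ := (lPhiInt μ a n ↑r).re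

lemma lPhi_ofReal (a : ℝ) (n : ℕ) (r s : ℝ) :
    lPhi a n ↑r s = (((2 * Real.pi * s) ^ a * (-(2 * s)⁻¹) ^ n * Real.exp (-(r / (2 * s))) : ℝ) : ℂ) := by
  unfold lPhi
  rw [Complex.ofReal_mul, Complex.ofReal_mul, Complex.ofReal_exp]
  push_cast
  ring

lemma lG_eq (μ : Measure ℝ) (a : ℝ) (n : ℕ) (r : ℝ) :
    lG μ a n r = ∫ s in Ioi (0 : ℝ),
      (2 * Real.pi * s) ^ a * (-(2 * s)⁻¹) ^ n * Real.exp (-(r / (2 * s))) ∂μ := by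
  unfold lG lPhiInt
  have : ∀ s : ℝ, lPhi a n ↑r s =
      (((2 * Real.pi * s) ^ a * (-(2 * s)⁻¹) ^ n * Real.exp (-(r / (2 * s))) : ℝ) : ℂ) :=
    fun s => lPhi_ofReal a n r s
  rw [show (fun s => lPhi a n (↑r) s) = fun s : ℝ =>
      (((2 * Real.pi * s) ^ a * (-(2 * s)⁻¹) ^ n * Real.exp (-(r / (2 * s))) : ℝ) : ℂ)
    from funext this]
  have h2 : (∫ s in Ioi (0 : ℝ),
        (((2 * Real.pi * s) ^ a * (-(2 * s)⁻¹) ^ n * Real.exp (-(r / (2 * s))) : ℝ) : ℂ) ∂μ)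
      = (((∫ s in Ioi (0 : ℝ),
        ((2 * Real.pi * s) ^ a * (-(2 * s)⁻¹) ^ n * Real.exp (-(r / (2 * s))) : ℝ) ∂μ) : ℝ) : ℂ) :=
    integral_ofReal
  rw [h2, Complex.ofReal_re]

lemma norm_lPhi (a : ℝ) (n : ℕ) (z : ℂ) {s : ℝ} (hs : 0 < s) :
    ‖lPhi a n z s‖ = (2 * Real.pi * s) ^ a * ((2 * s)⁻¹) ^ n * Real.exp (-(z.re / (2 * s))) := by
  have h2s : (2 * (s : ℂ)) = ((2 * s : ℝ) : ℂ) := by push_cast; ring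
  unfold lPhi
  rw [norm_mul, norm_mul, norm_pow, Complex.norm_exp]
  congr 1
  · congr 1
    · rw [Complex.norm_real, Real.norm_eq_abs, abs_of_nonneg (Real.rpow_nonneg (by positivity) a)]
    · rw [norm_neg, norm_inv, h2s, Complex.norm_real, Real.norm_eq_abs,
        abs_of_nonneg (by positivity)]
  · congr 1
    rw [h2s]
    rw [Complex.neg_re, Complex.div_ofReal_re]

lemma lBound (a : ℝ) (ha : a < 0) (n : ℕ) (b : ℝ) (hb : 0 < b) :
    ∃ C : ℝ, 0 ≤ C ∧ ∀ s ∈ Ioi (0 : ℝ), ∀ x : ℝ, b ≤ x →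
      (2 * Real.pi * s) ^ a * ((2 * s)⁻¹) ^ n * Real.exp (-(x / (2 * s))) ≤ C * min 1 s := by
  set m : ℕ := n + ⌈-a⌉₊ + 1 with hm
  have hma : (1 : ℝ) ≤ a - n + m := by
    have : (-a : ℝ) ≤ ⌈-a⌉₊ := Nat.le_ceil _
    push_cast [hm]
    linarith
  refine ⟨(2 * Real.pi) ^ a * ((m.factorial : ℝ) * (2 / b) ^ m) + (2 * Real.pi) ^ a,
    by positivity, ?_⟩
  rintro s hs x hx
  rw [mem_Ioi] at hs
  have hπ : (0 : ℝ) < 2 * Real.pi := by positivity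
  have hbase : (2 * Real.pi * s) ^ a = (2 * Real.pi) ^ a * s ^ a :=
    Real.mul_rpow hπ.le hs.le
  have hexp : Real.exp (-(x / (2 * s))) ≤ Real.exp (-(b / (2 * s))) := by
    apply Real.exp_le_exp.2
    have : b / (2 * s) ≤ x / (2 * s) := by
      apply div_le_div_of_nonneg_right hx (by positivity) |>.trans_eq rfl
    linarith
  have hexp2 : Real.exp (-(b / (2 * s))) ≤ (m.factorial : ℝ) * (2 / b) ^ m * s ^ m := by
    have h1 : (b / (2 * s)) ^ m / (m.factorial : ℝ) ≤ Real.exp (b / (2 * s)) :=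
      Real.pow_div_factorial_le_exp _ (by positivity) m
    have h2 : Real.exp (-(b / (2 * s))) = (Real.exp (b / (2 * s)))⁻¹ := by
      rw [Real.exp_neg]
    rw [h2]
    have h3 : ((b / (2 * s)) ^ m / (m.factorial : ℝ))⁻¹ = (m.factorial : ℝ) * (2 * s / b) ^ m := by
      rw [inv_div, div_pow, div_div_eq_mul_div, div_pow]
      field_simp
    calc (Real.exp (b / (2 * s)))⁻¹ ≤ ((b / (2 * s)) ^ m / (m.factorial : ℝ))⁻¹ := by
          apply inv_anti₀ (by positivity) h1
      _ = (m.factorial : ℝ) * (2 / b) ^ m * s ^ m := by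
          rw [h3, show (2 * s / b : ℝ) = (2 / b) * s by ring, mul_pow]
          ring
  rcases le_or_gt s 1 with h1 | h1
  · -- s ≤ 1 : bound by C₁ * s
    have hmin : min 1 s = s := min_eq_right h1
    rw [hmin]
    have hsa : s ^ a * ((2 * s)⁻¹) ^ n * (s : ℝ) ^ m ≤ s := by
      have e1 : ((2 * s)⁻¹ : ℝ) ^ n = (2 : ℝ)⁻¹ ^ n * (s⁻¹) ^ n := by
        rw [mul_inv, mul_pow]
      have e2 : (s⁻¹ : ℝ) ^ n = s ^ (-(n : ℝ)) := by
        rw [inv_pow, ← Real.rpow_natCast s n, ← Real.rpow_neg hs.le]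
      have e3 : (s : ℝ) ^ m = s ^ (m : ℝ) := (Real.rpow_natCast s m).symm
      have e4 : s ^ a * s ^ (-(n : ℝ)) * s ^ (m : ℝ) = s ^ (a - n + m) := by
        rw [← Real.rpow_add hs, ← Real.rpow_add hs]
        ring_nf
      have e5 : s ^ (a - n + m) ≤ s ^ (1 : ℝ) :=
        Real.rpow_le_rpow_of_exponent_ge hs h1 hma
      have e6 : (2 : ℝ)⁻¹ ^ n ≤ 1 := by
        apply pow_le_one₀ (by norm_num) (by norm_num)
      calc s ^ a * ((2 * s)⁻¹) ^ n * (s : ℝ) ^ m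
          = (2 : ℝ)⁻¹ ^ n * (s ^ a * s ^ (-(n : ℝ)) * s ^ (m : ℝ)) := by
            rw [e1, e2, e3]; ring
        _ ≤ 1 * (s ^ (a - n + m)) := by
            rw [e4]
            apply mul_le_mul e6 le_rfl (by positivity) one_pos.le
        _ ≤ s := by rw [one_mul]; simpa using e5
    calc (2 * Real.pi * s) ^ a * ((2 * s)⁻¹) ^ n * Real.exp (-(x / (2 * s)))
        ≤ (2 * Real.pi * s) ^ a * ((2 * s)⁻¹) ^ n * ((m.factorial : ℝ) * (2 / b) ^ m * s ^ m) := by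
          apply mul_le_mul_of_nonneg_left (hexp.trans hexp2) (by positivity)
      _ = (2 * Real.pi) ^ a * ((m.factorial : ℝ) * (2 / b) ^ m) *
            (s ^ a * ((2 * s)⁻¹) ^ n * (s : ℝ) ^ m) := by rw [hbase]; ring
      _ ≤ (2 * Real.pi) ^ a * ((m.factorial : ℝ) * (2 / b) ^ m) * s := by
          apply mul_le_mul_of_nonneg_left hsa (by positivity)
      _ ≤ ((2 * Real.pi) ^ a * ((m.factorial : ℝ) * (2 / b) ^ m) + (2 * Real.pi) ^ a) * s := by
          apply mul_le_mul_of_nonneg_right _ hs.le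
          nlinarith [Real.rpow_pos_of_pos hπ a]
  · -- s > 1
    have hmin : min 1 s = 1 := min_eq_left h1.le
    rw [hmin, mul_one]
    have hsa : s ^ a ≤ 1 := Real.rpow_le_one_of_one_le_of_nonpos h1.le ha.le
    have h2n : ((2 * s)⁻¹ : ℝ) ^ n ≤ 1 := by
      apply pow_le_one₀ (by positivity)
      rw [inv_le_one_iff₀]
      right; linarith
    have hex : Real.exp (-(x / (2 * s))) ≤ 1 := by
      apply Real.exp_le_one_iff.2
      have : 0 ≤ x / (2 * s) := div_nonneg (by linarith) (by linarith)
      linarith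
    have hA : (0:ℝ) ≤ (2 * Real.pi * s) ^ a :=
      Real.rpow_nonneg (mul_nonneg (by positivity) hs.le) a
    have hB : (0:ℝ) ≤ ((2 * s)⁻¹ : ℝ) ^ n := pow_nonneg (inv_nonneg.2 (by linarith)) n
    have hC : (0:ℝ) ≤ Real.exp (-(x / (2 * s))) := Real.exp_nonneg _
    have t1 : (2 * Real.pi * s) ^ a ≤ (2 * Real.pi) ^ a := by
      rw [hbase]
      nlinarith [Real.rpow_pos_of_pos hπ a, hsa, Real.rpow_nonneg hs.le a]
    have hA0 : (0:ℝ) < (2 * Real.pi) ^ a := Real.rpow_pos_of_pos hπ a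
    have key : (2 * Real.pi * s) ^ a * ((2 * s)⁻¹) ^ n * Real.exp (-(x / (2 * s)))
        ≤ (2 * Real.pi) ^ a := by
      nlinarith [mul_le_one₀ h2n hC hex, mul_nonneg hB hC]
    have hT : (0:ℝ) ≤ (2 * Real.pi) ^ a * ((m.factorial : ℝ) * (2 / b) ^ m) := by positivity
    linarith

lemma lIntegrable_min (μ : Measure ℝ)
    (hμ : ∫⁻ s in Set.Ioi (0 : ℝ), ENNReal.ofReal (min 1 s) ∂μ < ⊤) (C : ℝ) (hC : 0 ≤ C) :
    Integrable (fun s => C * min 1 s) (μ.restrict (Ioi 0)) := by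
  constructor
  · exact (Continuous.aestronglyMeasurable (continuous_const.mul (continuous_const.min continuous_id)))
  · rw [hasFiniteIntegral_iff_norm]
    calc ∫⁻ s, ENNReal.ofReal ‖C * min 1 s‖ ∂(μ.restrict (Ioi 0))
        ≤ ∫⁻ s, ENNReal.ofReal C * ENNReal.ofReal (min 1 s) ∂(μ.restrict (Ioi 0)) := by
          apply lintegral_mono_ae
          filter_upwards [ae_restrict_mem measurableSet_Ioi] with s hs
          have hmin : 0 ≤ min 1 s := le_min zero_le_one (mem_Ioi.1 hs).le
          rw [← ENNReal.ofReal_mul hC]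
          apply ENNReal.ofReal_le_ofReal
          rw [Real.norm_eq_abs, abs_mul, abs_of_nonneg hC, abs_of_nonneg hmin]
      _ = ENNReal.ofReal C * ∫⁻ s in Ioi (0:ℝ), ENNReal.ofReal (min 1 s) ∂μ :=
          lintegral_const_mul' _ _ ENNReal.ofReal_ne_top
      _ < ⊤ := ENNReal.mul_lt_top ENNReal.ofReal_lt_top hμ

lemma lPhi_contOn (a : ℝ) (n : ℕ) (z : ℂ) :
    ContinuousOn (fun s => lPhi a n z s) (Ioi (0:ℝ)) := by
  unfold lPhi
  apply ContinuousOn.mul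
  apply ContinuousOn.mul
  · apply Complex.continuous_ofReal.comp_continuousOn
    apply ContinuousOn.rpow_const
    · fun_prop
    · intro s hs
      left
      have := mem_Ioi.1 hs
      positivity
  · apply ContinuousOn.pow
    apply ContinuousOn.neg
    apply ContinuousOn.inv₀
    · fun_prop
    · intro s hs
      have hs' := mem_Ioi.1 hs
      simp only [ne_eq, mul_eq_zero, not_or]
      exact ⟨two_ne_zero, by exact_mod_cast hs'.ne'⟩
  · apply Continuous.comp_continuousOn Complex.continuous_exp
    apply ContinuousOn.neg
    apply ContinuousOn.div continuousOn_const
    · fun_prop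
    · intro s hs
      have hs' := mem_Ioi.1 hs
      simp only [ne_eq, mul_eq_zero, not_or]
      exact ⟨two_ne_zero, by exact_mod_cast hs'.ne'⟩

lemma lPhi_integrable (μ : Measure ℝ)
    (hμ : ∫⁻ s in Set.Ioi (0 : ℝ), ENNReal.ofReal (min 1 s) ∂μ < ⊤)
    (a : ℝ) (ha : a < 0) (n : ℕ) {z : ℂ} (hz : 0 < z.re) :
    Integrable (fun s => lPhi a n z s) (μ.restrict (Ioi 0)) := by
  obtain ⟨C, hC0, hC⟩ := lBound a ha n z.re hz
  apply Integrable.mono (lIntegrable_min μ hμ C hC0)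
    ((lPhi_contOn a n z).aestronglyMeasurable measurableSet_Ioi)
  filter_upwards [ae_restrict_mem measurableSet_Ioi] with s hs
  rw [norm_lPhi a n z (mem_Ioi.1 hs), Real.norm_eq_abs,
    abs_of_nonneg (mul_nonneg hC0 (le_min zero_le_one (mem_Ioi.1 hs).le))]
  exact hC s hs z.re le_rfl

lemma lPhi_hasDerivAt (a : ℝ) (n : ℕ) (z : ℂ) {s : ℝ} (hs : 0 < s) :
    HasDerivAt (fun w => lPhi a n w s) (lPhi a (n+1) z s) z := by
  have hs2 : (2 * (s:ℂ)) ≠ 0 := by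
    simp only [ne_eq, mul_eq_zero, not_or]
    exact ⟨two_ne_zero, by exact_mod_cast hs.ne'⟩
  have h1 : HasDerivAt (fun w : ℂ => -(w / (2 * (s:ℂ)))) (-(2 * (s:ℂ))⁻¹) z := by
    have := ((hasDerivAt_id' z).div_const (2 * (s:ℂ))).neg
    rw [one_div] at this
    exact this
  have h2 : HasDerivAt (fun w : ℂ => Complex.exp (-(w / (2 * (s:ℂ)))))
      (Complex.exp (-(z / (2 * (s:ℂ)))) * -(2 * (s:ℂ))⁻¹) z := h1.cexp
  have h3 := h2.const_mul ((((2 * Real.pi * s) ^ a : ℝ) : ℂ) * (-(2 * (s : ℂ))⁻¹) ^ n)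
  have h4 : lPhi a (n+1) z s = ((((2 * Real.pi * s) ^ a : ℝ) : ℂ) * (-(2 * (s : ℂ))⁻¹) ^ n) *
      (Complex.exp (-(z / (2 * (s:ℂ)))) * -(2 * (s:ℂ))⁻¹) := by
    unfold lPhi
    ring
  rw [h4]
  exact h3

lemma lPhiInt_hasDerivAt (μ : Measure ℝ)
    (hμ : ∫⁻ s in Set.Ioi (0 : ℝ), ENNReal.ofReal (min 1 s) ∂μ < ⊤)
    (a : ℝ) (ha : a < 0) (n : ℕ) {z : ℂ} (hz : 0 < z.re) :
    HasDerivAt (lPhiInt μ a n) (lPhiInt μ a (n+1) z) z := by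
  obtain ⟨C, hC0, hC⟩ := lBound a ha (n+1) (z.re / 2) (by linarith)
  have hε : (0:ℝ) < z.re / 2 := by linarith
  have hre : ∀ x ∈ Metric.ball z (z.re / 2), z.re / 2 ≤ x.re := by
    intro x hx
    have h1 : |(x - z).re| ≤ ‖x - z‖ := Complex.abs_re_le_norm _
    rw [Metric.mem_ball, Complex.dist_eq] at hx
    have : |x.re - z.re| < z.re / 2 := by
      rw [← Complex.sub_re]; exact lt_of_le_of_lt h1 hx
    have := abs_lt.1 this
    linarith
  have key := hasDerivAt_integral_of_dominated_loc_of_deriv_le (Metric.ball_mem_nhds z hε)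
    (F := fun w s => lPhi a n w s) (F' := fun w s => lPhi a (n+1) w s)
    (bound := fun s => C * min 1 s)
    (μ := μ.restrict (Ioi 0)) (x₀ := z)
    ?_ (lPhi_integrable μ hμ a ha n hz) ?_ ?_ ?_ ?_
  · exact key.2
  · filter_upwards with w
    exact (lPhi_contOn a n w).aestronglyMeasurable measurableSet_Ioi
  · exact (lPhi_contOn a (n+1) z).aestronglyMeasurable measurableSet_Ioi
  · filter_upwards [ae_restrict_mem measurableSet_Ioi] with s hs
    intro x hx
    rw [norm_lPhi a (n+1) x (mem_Ioi.1 hs)]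
    exact hC s hs x.re (hre x hx)
  · exact lIntegrable_min μ hμ C hC0
  · filter_upwards [ae_restrict_mem measurableSet_Ioi] with s hs
    intro x _
    exact lPhi_hasDerivAt a n x (mem_Ioi.1 hs)

lemma lPhiInt_analytic (μ : Measure ℝ)
    (hμ : ∫⁻ s in Set.Ioi (0 : ℝ), ENNReal.ofReal (min 1 s) ∂μ < ⊤)
    (a : ℝ) (ha : a < 0) (n : ℕ) :
    AnalyticOnNhd ℂ (lPhiInt μ a n) {z : ℂ | 0 < z.re} := by
  have hopen : IsOpen {z : ℂ | 0 < z.re} := isOpen_lt continuous_const Complex.continuous_re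
  apply DifferentiableOn.analyticOnNhd _ hopen
  intro z hz
  exact ((lPhiInt_hasDerivAt μ hμ a ha n hz).differentiableAt).differentiableWithinAt

lemma lG_analytic (μ : Measure ℝ)
    (hμ : ∫⁻ s in Set.Ioi (0 : ℝ), ENNReal.ofReal (min 1 s) ∂μ < ⊤)
    (a : ℝ) (ha : a < 0) (n : ℕ) :
    AnalyticOnNhd ℝ (lG μ a n) (Ioi (0:ℝ)) := by
  have h1 : AnalyticOnNhd ℝ (lPhiInt μ a n) {z : ℂ | 0 < z.re} :=
    (lPhiInt_analytic μ hμ a ha n).restrictScalars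
  have h2 : AnalyticOnNhd ℝ (fun r : ℝ => (r : ℂ)) (Ioi (0:ℝ)) :=
    Complex.ofRealCLM.analyticOnNhd _
  have h3 : AnalyticOnNhd ℝ (fun z : ℂ => z.re) univ :=
    Complex.reCLM.analyticOnNhd _
  have h4 : AnalyticOnNhd ℝ (fun r : ℝ => lPhiInt μ a n ↑r) (Ioi (0:ℝ)) := by
    apply h1.comp h2
    intro r hr
    simpa using mem_Ioi.1 hr
  exact h3.comp h4 (mapsTo_univ _ _)

lemma lG_hasDerivAt (μ : Measure ℝ)
    (hμ : ∫⁻ s in Set.Ioi (0 : ℝ), ENNReal.ofReal (min 1 s) ∂μ < ⊤)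
    (a : ℝ) (ha : a < 0) (n : ℕ) {r : ℝ} (hr : 0 < r) :
    HasDerivAt (lG μ a n) (lG μ a (n+1) r) r := by
  have hz : 0 < (r : ℂ).re := by simpa using hr
  have := (lPhiInt_hasDerivAt μ hμ a ha n hz).real_of_complex
  exact this

lemma lG_nonneg (μ : Measure ℝ) (a : ℝ) (n : ℕ) {r : ℝ} (hr : 0 < r) :
    0 ≤ (-1 : ℝ) ^ n * lG μ a n r := by
  rw [lG_eq, ← integral_const_mul]
  apply setIntegral_nonneg measurableSet_Ioi
  intro s hs
  have hs' := mem_Ioi.1 hs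
  have h1 : ((-1:ℝ)) ^ n * ((2 * Real.pi * s) ^ a * (-(2 * s)⁻¹) ^ n * Real.exp (-(r / (2 * s))))
      = (2 * Real.pi * s) ^ a * ((2 * s)⁻¹) ^ n * Real.exp (-(r / (2 * s))) := by
    have h : ((-1:ℝ)) ^ n * ((-1:ℝ)) ^ n = 1 := by
      rw [← mul_pow]; norm_num
    rw [neg_pow ((2*s)⁻¹)]
    linear_combination ((2 * Real.pi * s) ^ a * ((2 * s)⁻¹) ^ n *
      Real.exp (-(r / (2 * s)))) * h
  rw [h1]
  have : (0:ℝ) ≤ (2 * Real.pi * s) ^ a :=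
    Real.rpow_nonneg (mul_nonneg (by positivity) hs'.le) a
  have : (0:ℝ) ≤ ((2 * s)⁻¹ : ℝ) ^ n := pow_nonneg (inv_nonneg.2 (by linarith)) n
  positivity

end LevyAux

/-- Let `m_k(r) = ∫_{(0,∞)} (2πs)^{-k/2} e^{-r²/(2s)} dμ(s)` where `μ` is a measure on `(0,∞)`
with `∫ min(1,s) dμ(s) < ∞` (the Lévy measure of a subordinator). Then for `k ≥ 3` and all
`r > 0`, `m_k(r) = -(1/(2π)) (1/r) (d/dr) m_{k-2}(r)`, and `r ↦ m_k(√r)` is completely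
monotone on `(0,∞)`. -/
theorem levy_density_dimension_walk (μ : Measure ℝ)
    (hμ : ∫⁻ s in Set.Ioi (0 : ℝ), ENNReal.ofReal (min 1 s) ∂μ < ⊤)
    (m : ℕ → ℝ → ℝ)
    (hm : ∀ k : ℕ, ∀ r : ℝ, m k r = ∫ s in Set.Ioi (0 : ℝ),
      (2 * Real.pi * s) ^ (-(k : ℝ) / 2) * Real.exp (-(r ^ 2 / (2 * s))) ∂μ)
    (k : ℕ) (hk : 3 ≤ k) :
    (∀ r : ℝ, 0 < r →
        m k r = -(1 / (2 * Real.pi)) * (1 / r) * deriv (m (k - 2)) r) ∧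
      CompletelyMonotoneOn (fun r => m k (Real.sqrt r)) := by
  have hπ0 : Real.pi ≠ 0 := Real.pi_ne_zero
  have hk2 : ((k - 2 : ℕ) : ℝ) = (k : ℝ) - 2 := by
    have h2 : 2 ≤ k := by omega
    rw [Nat.cast_sub h2]
    norm_num
  have ha : -(k : ℝ) / 2 < 0 := by
    have : (3:ℝ) ≤ (k:ℝ) := by exact_mod_cast hk
    linarith
  have ha' : -((k - 2 : ℕ) : ℝ) / 2 < 0 := by
    rw [hk2]
    have : (3:ℝ) ≤ (k:ℝ) := by exact_mod_cast hk
    linarith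
  have hm_eq : ∀ (j : ℕ) (r : ℝ), m j r = lG μ (-(j : ℝ)/2) 0 (r ^ 2) := by
    intro j r
    rw [hm, lG_eq]
    simp only [pow_zero, mul_one]
  constructor
  · intro r hr
    have hr2 : (0:ℝ) < r ^ 2 := by positivity
    have hG : HasDerivAt (lG μ (-((k - 2 : ℕ) : ℝ)/2) 0) (lG μ (-((k - 2 : ℕ) : ℝ)/2) 1 (r ^ 2))
        (r ^ 2) := lG_hasDerivAt μ hμ _ ha' 0 hr2
    have hsq : HasDerivAt (fun x : ℝ => x ^ 2) (2 * r) r := by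
      simpa using hasDerivAt_pow 2 r
    have hcomp : HasDerivAt (m (k - 2)) (lG μ (-((k - 2 : ℕ) : ℝ)/2) 1 (r ^ 2) * (2 * r)) r := by
      have hfun : m (k - 2) = fun x => lG μ (-((k - 2 : ℕ) : ℝ)/2) 0 (x ^ 2) :=
        funext fun x => hm_eq (k - 2) x
      rw [hfun]
      exact HasDerivAt.comp (h := fun x : ℝ => x ^ 2) (x := r) hG hsq
    rw [hcomp.deriv]
    have hrne : r ≠ 0 := hr.ne'
    have hstep : -(1 / (2 * Real.pi)) * (1 / r) * (lG μ (-((k - 2 : ℕ) : ℝ)/2) 1 (r ^ 2) * (2 * r))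
        = -(1 / Real.pi) * lG μ (-((k - 2 : ℕ) : ℝ)/2) 1 (r ^ 2) := by
      field_simp
    rw [hstep, lG_eq, ← integral_const_mul, hm]
    apply setIntegral_congr_fun measurableSet_Ioi
    intro s hs
    have hs' := mem_Ioi.1 hs
    have h2πs : (0:ℝ) < 2 * Real.pi * s := by positivity
    have key : (2 * Real.pi * s) ^ (-(k : ℝ) / 2)
        = (2 * Real.pi * s) ^ (-((k - 2 : ℕ) : ℝ)/2) * (2 * Real.pi * s)⁻¹ := by
      rw [← Real.rpow_neg_one (2 * Real.pi * s), ← Real.rpow_add h2πs]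
      congr 1
      rw [hk2]
      ring
    simp only [pow_one]
    rw [key]
    have hs0 : s ≠ 0 := hs'.ne'
    field_simp
  · refine ⟨?_, ?_⟩
    · have hC : ContDiffOn ℝ (⊤ : ℕ∞) (lG μ (-(k : ℝ)/2) 0) (Set.Ioi 0) :=
        ((contDiffOn_omega_iff_analyticOn (uniqueDiffOn_Ioi 0)).2
          (lG_analytic μ hμ _ ha 0).analyticOn).of_le le_top
      apply hC.congr
      intro r hr
      rw [hm_eq k (Real.sqrt r), Real.sq_sqrt (le_of_lt (Set.mem_Ioi.1 hr))]
    · intro n r hr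
      have hiter : ∀ n, Set.EqOn
          (iteratedDerivWithin n (fun r => m k (Real.sqrt r)) (Set.Ioi 0))
          (lG μ (-(k : ℝ)/2) n) (Set.Ioi 0) := by
        intro n
        induction n with
        | zero =>
          intro x hx
          simp only [iteratedDerivWithin_zero]
          rw [hm_eq k (Real.sqrt x), Real.sq_sqrt (Set.mem_Ioi.1 hx).le]
        | succ n ih =>
          intro x hx
          rw [iteratedDerivWithin_succ]
          rw [derivWithin_congr ih (ih hx)]
          rw [derivWithin_of_isOpen isOpen_Ioi hx]
          exact (lG_hasDerivAt μ hμ _ ha n (Set.mem_Ioi.1 hx)).deriv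
      rw [hiter n (Set.mem_Ioi.2 hr)]
      exact lG_nonneg μ _ n hr
end LevyAux
end
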